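/- Lifting lemma: for all natural numbers t and k ≥ 1, α(2^t · k) ≤ α(k), where α(n) is the minimum size of a family of finite sets whose generated ideal has exactly n elements. -/

import Mathlib

/-- The ideal generated by a finite family of finite sets: the union of their power sets. -/
def idealOf (𝒮 : Finset (Finset ℕ)) : Finset (Finset ℕ) :=
  𝒮.sup Finset.powerset

/-- `alpha n` is the minimum size of a family of finite sets whose generated ideal
has exactly `n` elements. -/
noncomputable def alpha (n : ℕ) : ℕ :=
  sInf {m | ∃ 𝒮 : Finset (Finset ℕ), 𝒮.card = m ∧ (idealOf 𝒮).card = n}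

lemma mem_idealOf {𝒮 : Finset (Finset ℕ)} {X : Finset ℕ} :
    X ∈ idealOf 𝒮 ↔ ∃ S ∈ 𝒮, X ⊆ S := by
  simp [idealOf, Finset.mem_sup, Finset.mem_powerset]

lemma exists_ideal_card (k : ℕ) (hk : 1 ≤ k) :
    ∃ 𝒮 : Finset (Finset ℕ), (idealOf 𝒮).card = k := by
  obtain ⟨n, rfl⟩ := Nat.exists_eq_add_of_le hk
  refine ⟨insert ∅ ((Finset.range n).image (fun i => {i})), ?_⟩
  have h : idealOf (insert ∅ ((Finset.range n).image (fun i => ({i} : Finset ℕ))))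
      = insert ∅ ((Finset.range n).image (fun i => ({i} : Finset ℕ))) := by
    ext X
    simp only [mem_idealOf, Finset.mem_insert, Finset.mem_image, Finset.mem_range]
    constructor
    · rintro ⟨S, hS, hXS⟩
      rcases hS with rfl | ⟨i, hi, rfl⟩
      · left; exact Finset.subset_empty.mp hXS
      · rcases Finset.subset_singleton_iff.mp hXS with rfl | rfl
        · left; rfl
        · right; exact ⟨i, hi, rfl⟩
    · rintro (rfl | ⟨i, hi, rfl⟩)
      · exact ⟨∅, Or.inl rfl, le_rfl⟩
      · exact ⟨{i}, Or.inr ⟨i, hi, rfl⟩, le_rfl⟩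
  rw [h, Finset.card_insert_of_notMem, Finset.card_image_of_injective _ Finset.singleton_injective,
    Finset.card_range]
  · omega
  · simp

def shiftF (t : ℕ) (S : Finset ℕ) : Finset ℕ := Finset.range t ∪ S.image (· + t)

lemma shiftF_recover (t : ℕ) (S : Finset ℕ) :
    ((shiftF t S).filter (fun x => t ≤ x)).image (· - t) = S := by
  ext s
  simp only [shiftF, Finset.mem_image, Finset.mem_filter, Finset.mem_union, Finset.mem_range]
  constructor
  · rintro ⟨x, ⟨hx | ⟨y, hy, rfl⟩, hx2⟩, rfl⟩
    · omega
    · simpa using hy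
  · intro hs
    exact ⟨s + t, ⟨Or.inr ⟨s, hs, rfl⟩, by omega⟩, by omega⟩

lemma shiftF_injective (t : ℕ) : Function.Injective (shiftF t) := by
  intro S₁ S₂ h
  rw [← shiftF_recover t S₁, ← shiftF_recover t S₂, h]

lemma key (t : ℕ) (𝒮 : Finset (Finset ℕ)) :
    (idealOf (𝒮.image (shiftF t))).card = 2 ^ t * (idealOf 𝒮).card := by
  have := Finset.card_nbij' (s := (Finset.range t).powerset ×ˢ idealOf 𝒮)
    (t := idealOf (𝒮.image (shiftF t)))
    (i := fun p => p.1 ∪ p.2.image (· + t))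
    (j := fun X => (X.filter (fun x => x < t), (X.filter (fun x => t ≤ x)).image (· - t)))
    (hi := ?_) (hj := ?_) (left_inv := ?_) (right_inv := ?_)
  · rw [← this, Finset.card_product, Finset.card_powerset, Finset.card_range]
  · rintro ⟨A, B⟩ hp
    rw [Finset.mem_coe, Finset.mem_product, Finset.mem_powerset] at hp
    obtain ⟨hA, hB⟩ := hp
    rw [mem_idealOf] at hB; rw [Finset.mem_coe, mem_idealOf]
    obtain ⟨S, hS, hBS⟩ := hB
    refine ⟨shiftF t S, Finset.mem_image_of_mem _ hS, ?_⟩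
    unfold shiftF
    exact Finset.union_subset_union hA (Finset.image_subset_image hBS)
  · intro X hX
    rw [Finset.mem_coe, mem_idealOf] at hX
    obtain ⟨S', hS', hXS'⟩ := hX
    obtain ⟨S, hS, rfl⟩ := Finset.mem_image.mp hS'
    rw [Finset.mem_coe, Finset.mem_product, Finset.mem_powerset]
    constructor
    · intro x hx
      simp only [Finset.mem_filter] at hx
      exact Finset.mem_range.mpr hx.2
    · rw [mem_idealOf]
      refine ⟨S, hS, ?_⟩
      intro s hs
      simp only [Finset.mem_image, Finset.mem_filter] at hs
      obtain ⟨x, ⟨hxX, hxt⟩, rfl⟩ := hs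
      have := hXS' hxX
      simp only [shiftF, Finset.mem_union, Finset.mem_range, Finset.mem_image] at this
      rcases this with h | ⟨y, hy, rfl⟩
      · omega
      · simpa [Nat.add_sub_cancel] using hy
  · rintro ⟨A, B⟩ hp
    rw [Finset.mem_coe, Finset.mem_product, Finset.mem_powerset] at hp
    obtain ⟨hA, _⟩ := hp
    have h1 : (A ∪ B.image (· + t)).filter (fun x => x < t) = A := by
      ext x
      simp only [Finset.mem_filter, Finset.mem_union, Finset.mem_image]
      constructor
      · rintro ⟨hx | ⟨y, hy, rfl⟩, hlt⟩
        · exact hx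
        · omega
      · intro hx
        exact ⟨Or.inl hx, Finset.mem_range.mp (hA hx)⟩
    have h2 : (((A ∪ B.image (· + t)).filter (fun x => t ≤ x)).image (· - t)) = B := by
      ext s
      simp only [Finset.mem_image, Finset.mem_filter, Finset.mem_union]
      constructor
      · rintro ⟨x, ⟨hx | ⟨y, hy, rfl⟩, hx2⟩, rfl⟩
        · have := Finset.mem_range.mp (hA hx); omega
        · simpa using hy
      · intro hs
        exact ⟨s + t, ⟨Or.inr ⟨s, hs, rfl⟩, by omega⟩, by omega⟩
    simp [h1, h2]
  · intro X hX
    rw [Finset.mem_coe, mem_idealOf] at hX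
    obtain ⟨S', hS', hXS'⟩ := hX
    obtain ⟨S, hS, rfl⟩ := Finset.mem_image.mp hS'
    simp only
    ext x
    simp only [Finset.mem_union, Finset.mem_image, Finset.mem_filter]
    constructor
    · rintro (⟨hx, _⟩ | ⟨y, ⟨z, ⟨hz, hzt⟩, rfl⟩, rfl⟩)
      · exact hx
      · simpa [Nat.sub_add_cancel hzt] using hz
    · intro hx
      by_cases hlt : x < t
      · exact Or.inl ⟨hx, hlt⟩
      · exact Or.inr ⟨x - t, ⟨x, ⟨hx, by omega⟩, rfl⟩, by omega⟩

/-- Lifting lemma. -/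
theorem alpha_lifting (t k : ℕ) (hk : 1 ≤ k) :
    alpha (2 ^ t * k) ≤ alpha k := by
  have hne : {m | ∃ 𝒮 : Finset (Finset ℕ), 𝒮.card = m ∧ (idealOf 𝒮).card = k}.Nonempty := by
    obtain ⟨𝒮, h𝒮⟩ := exists_ideal_card k hk
    exact ⟨𝒮.card, 𝒮, rfl, h𝒮⟩
  have hmem := Nat.sInf_mem hne
  obtain ⟨𝒮, hcard, hideal⟩ := hmem
  apply Nat.sInf_le
  refine ⟨𝒮.image (shiftF t), ?_, ?_⟩
  · rw [Finset.card_image_of_injective _ (shiftF_injective t)]; exact hcard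
  · rw [key t 𝒮, hideal]
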